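/- arXiv:1802.07964 — 6 statements merged into one kernel-verified Lean document; each statement's English description precedes it below -/
import Mathlib

section
/- Let A be an antiunitary operator (A = U_A K with U_A unitary and K complex conjugation) and η = ±1. If H is an invertible matrix with polar decomposition H = UP and A H = η H' A where H' is another invertible matrix with polar decomposition H' = U'P', then A U = η U' A and P' = U_A P* U_A†. -/
/-!
Conjugating by the antiunitary `A = U_A K` is multiplicative and preserves both unitarity and
positivity, so it carries the polar decomposition `H = U P` to a polar decomposition
`η H' = (U_A U* U_Aᴴ) (U_A P* U_Aᴴ)`. Polar decompositions of invertible matrices are unique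
(`P` is the positive square root of `HᴴH`, and then `U = H P⁻¹`), so the factors must agree with
`U'` and `P'`.
-/

open scoped ComplexOrder

open Matrix

namespace Matrix

variable {n : Type*} [Fintype n]

section CommRing

variable {R : Type*} [CommRing R] [StarRing R]

/-- `A X A⁻¹` for the antiunitary `A = W K`, `K` being entrywise conjugation. -/
def antiunitaryConj (W X : Matrix n n R) : Matrix n n R := W * X.map (starRingEnd R) * Wᴴ

variable [DecidableEq n] {W : Matrix n n R}

theorem antiunitaryConj_mul (hW : W ∈ unitaryGroup n R) (X Y : Matrix n n R) :
    antiunitaryConj W (X * Y) = antiunitaryConj W X * antiunitaryConj W Y := by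
  have hWW : Wᴴ * W = 1 := Unitary.star_mul_self_of_mem hW
  simp only [antiunitaryConj, Matrix.map_mul, Matrix.mul_assoc]
  rw [← Matrix.mul_assoc Wᴴ, hWW, Matrix.one_mul]

theorem antiunitaryConj_mem_unitaryGroup (hW : W ∈ unitaryGroup n R) {U : Matrix n n R}
    (hU : U ∈ unitaryGroup n R) : antiunitaryConj W U ∈ unitaryGroup n R :=
  mul_mem (mul_mem hW (map_star_mem_unitaryGroup_iff.mpr hU)) (Unitary.star_mem hW)

theorem mul_map_eq_smul_mul_iff (hW : W ∈ unitaryGroup n R) {η : R} (hη : η * η = 1)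
    (X Y : Matrix n n R) :
    W * X.map (starRingEnd R) = η • (Y * W) ↔ Y = η • antiunitaryConj W X := by
  have hWW : W * Wᴴ = 1 := Unitary.mul_star_self_of_mem hW
  have hWW' : Wᴴ * W = 1 := Unitary.star_mul_self_of_mem hW
  constructor
  · intro h
    rw [antiunitaryConj, h, Matrix.smul_mul, Matrix.mul_assoc, hWW, Matrix.mul_one, smul_smul, hη,
      one_smul]
  · rintro rfl
    rw [antiunitaryConj, Matrix.smul_mul, smul_smul, hη, one_smul, Matrix.mul_assoc, hWW',
      Matrix.mul_one]

end CommRing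

theorem PosSemidef.antiunitaryConj {𝕜 : Type*} [RCLike 𝕜] {P : Matrix n n 𝕜} (hP : P.PosSemidef)
    (W : Matrix n n 𝕜) : (antiunitaryConj W P).PosSemidef := by
  have hPt : P.map (starRingEnd 𝕜) = Pᵀ :=
    calc P.map (starRingEnd 𝕜) = Pᴴᵀ := rfl
      _ = Pᵀ := by rw [hP.1.eq]
  rw [Matrix.antiunitaryConj, hPt]
  exact hP.transpose.mul_mul_conjTranspose_same W

section RCLike

variable {𝕜 : Type*} [RCLike 𝕜] [DecidableEq n]

theorem conjTranspose_mul_self_unitary_mul {U P : Matrix n n 𝕜} (hU : U ∈ unitaryGroup n 𝕜)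
    (hP : P.IsHermitian) : (U * P)ᴴ * (U * P) = P ^ 2 := by
  rw [conjTranspose_mul, hP.eq, mul_assoc, ← mul_assoc Uᴴ, ← star_eq_conjTranspose,
    Unitary.star_mul_self_of_mem hU, one_mul, sq]

theorem PosSemidef.eq_of_unitary_mul_eq {U V P Q : Matrix n n 𝕜} (hU : U ∈ unitaryGroup n 𝕜)
    (hV : V ∈ unitaryGroup n 𝕜) (hP : P.PosSemidef) (hQ : Q.PosSemidef) (h : U * P = V * Q) :
    P = Q := by
  have hsq : P ^ 2 = Q ^ 2 := by
    rw [← conjTranspose_mul_self_unitary_mul hU hP.1, ← conjTranspose_mul_self_unitary_mul hV hQ.1,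
      h]
  open scoped MatrixOrder Matrix.Norms.L2Operator in
  exact (CFC.sq_eq_sq_iff P Q hP.nonneg hQ.nonneg).mp hsq

theorem polar_decomposition_unique {U V P Q : Matrix n n 𝕜} (hU : U ∈ unitaryGroup n 𝕜)
    (hV : V ∈ unitaryGroup n 𝕜) (hP : P.PosDef) (hQ : Q.PosSemidef) (h : U * P = V * Q) :
    U = V ∧ P = Q := by
  have hPQ := hP.posSemidef.eq_of_unitary_mul_eq hU hV hQ h
  exact ⟨hP.isUnit.mul_right_cancel (hPQ ▸ h), hPQ⟩

end RCLike

end Matrix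

theorem antiunitary_symmetry_polar_parts_general {n : ℕ}
    (H H' U U' P P' UA : Matrix (Fin n) (Fin n) ℂ) (η : ℂ)
    (hη : η = 1 ∨ η = -1)
    (hUA : UA ∈ Matrix.unitaryGroup (Fin n) ℂ)
    (hU : U ∈ Matrix.unitaryGroup (Fin n) ℂ)
    (hU' : U' ∈ Matrix.unitaryGroup (Fin n) ℂ)
    (hP : P.PosDef) (hP' : P'.PosDef)
    (hpolar : H = U * P) (hpolar' : H' = U' * P')
    (hsym : UA * H.map (starRingEnd ℂ) = η • (H' * UA)) :
    UA * U.map (starRingEnd ℂ) = η • (U' * UA) ∧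
      P' = UA * P.map (starRingEnd ℂ) * UA.conjTranspose := by
  have hη_sq : η * η = 1 := by rcases hη with rfl | rfl <;> norm_num
  have hη_unitary : η ∈ unitary ℂ := by rcases hη with rfl | rfl <;> simp [Unitary.mem_iff]
  rw [mul_map_eq_smul_mul_iff hUA hη_sq, hpolar, antiunitaryConj_mul hUA, hpolar',
    ← Matrix.smul_mul] at hsym
  obtain ⟨hU'_eq, hP'_eq⟩ := polar_decomposition_unique hU'
    (Unitary.smul_mem_of_mem hη_unitary (antiunitaryConj_mem_unitaryGroup hUA hU)) hP'
    (hP.posSemidef.antiunitaryConj UA) hsym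
  exact ⟨(mul_map_eq_smul_mul_iff hUA hη_sq U U').mpr hU'_eq, hP'_eq⟩

/-- An antiunitary (anti-)symmetry `A = U_A K` (with `U_A` unitary, `K` entrywise complex
conjugation, `η = ±1`) relating two invertible matrices `H`, `H'` via `A H = η H' A`
(i.e. `U_A H* = η H' U_A`) passes to their polar decompositions `H = U P`, `H' = U' P'`:
`U_A U* = η U' U_A` and `P' = U_A P* U_Aᴴ`. -/
theorem antiunitary_symmetry_polar_parts {n : ℕ}
    (H H' U U' P P' UA : Matrix (Fin n) (Fin n) ℂ) (η : ℂ)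
    (hη : η = 1 ∨ η = -1)
    (hUA : UA ∈ Matrix.unitaryGroup (Fin n) ℂ)
    (hH : IsUnit H.det) (hH' : IsUnit H'.det)
    (hU : U ∈ Matrix.unitaryGroup (Fin n) ℂ)
    (hU' : U' ∈ Matrix.unitaryGroup (Fin n) ℂ)
    (hP : P.PosDef) (hP' : P'.PosDef)
    (hpolar : H = U * P) (hpolar' : H' = U' * P')
    (hsym : UA * H.map (starRingEnd ℂ) = η • (H' * UA)) :
    UA * U.map (starRingEnd ℂ) = η • (U' * UA) ∧
      P' = UA * P.map (starRingEnd ℂ) * UA.conjTranspose :=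
  antiunitary_symmetry_polar_parts_general H H' U U' P P' UA η hη hUA hU hU' hP hP' hpolar hpolar'
    hsym
end

section
/- Let U : ℝ → U(n) be a smooth loop of unitary matrices satisfying U_A U(-k)* = η U(k) U_A for an antiunitary symmetry with fixed unitary U_A and η = ±1. Then the function k ↦ Tr[U(k)† ∂_k U(k)] is an even function of k. -/
/-!
Write `a k = Tr (U kᴴ U' k)`. Differentiating `U kᴴ U k = 1` shows that `U kᴴ U' k` is
skew-Hermitian, so `star (a k) = -a k`. Differentiating the symmetry gives
`U_A (U' (-k))* = -η U' k U_A`; as `U_A` is unitary and `star η * η = 1`, this yields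
`star (a (-k)) = -a k`. Hence `a (-k) = -star (a (-k)) = a k`.
-/

open Matrix

section Calculus

-- `HasDerivAt` for matrices uses the product topology; the entrywise sup norm induces it and
-- gives access to the derivative lemmas stated for normed spaces.
attribute [local instance] Matrix.normedAddCommGroup Matrix.normedSpace

variable {m n p : Type*}

section NormedField

variable {𝕜 : Type*} [NontriviallyNormedField 𝕜] {x : 𝕜}

theorem Matrix.hasDerivAt_iff [Fintype n] {R : Type*} [NormedAddCommGroup R] [NormedSpace 𝕜 R]
    {A : 𝕜 → Matrix m n R} {A' : Matrix m n R} :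
    HasDerivAt A A' x ↔ ∀ i j, HasDerivAt (fun t => A t i j) (A' i j) x :=
  hasDerivAt_pi.trans (forall_congr' fun _ => hasDerivAt_pi)

theorem HasDerivAt.matrix_mul [Fintype n] [Fintype p] {R : Type*} [NormedRing R]
    [NormedAlgebra 𝕜 R]
    {A : 𝕜 → Matrix m n R} {B : 𝕜 → Matrix n p R} {A' : Matrix m n R} {B' : Matrix n p R}
    (hA : HasDerivAt A A' x) (hB : HasDerivAt B B' x) :
    HasDerivAt (fun t => A t * B t) (A' * B x + A x * B') x := by
  rw [Matrix.hasDerivAt_iff] at *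
  intro i j
  simp only [Matrix.mul_apply, Matrix.add_apply, ← Finset.sum_add_distrib]
  exact HasDerivAt.fun_sum fun l _ => (hA i l).mul (hB l j)

end NormedField

variable {K : Type*} [RCLike K] {x : ℝ}

theorem HasDerivAt.matrix_map_conj [Fintype n] {A : ℝ → Matrix m n K} {A' : Matrix m n K}
    (hA : HasDerivAt A A' x) :
    HasDerivAt (fun t => (A t).map (starRingEnd K)) (A'.map (starRingEnd K)) x := by
  rw [Matrix.hasDerivAt_iff] at *
  exact fun i j => (hA i j).star

theorem HasDerivAt.matrix_conjTranspose [Fintype m] [Fintype n] {A : ℝ → Matrix m n K}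
    {A' : Matrix m n K} (hA : HasDerivAt A A' x) : HasDerivAt (fun t => (A t)ᴴ) A'ᴴ x := by
  rw [Matrix.hasDerivAt_iff] at *
  exact fun i j => (hA j i).star

theorem HasDerivAt.conjTranspose_mul_mem_skewAdjoint [Fintype n] [DecidableEq n]
    {U : ℝ → Matrix n n K} {U' : Matrix n n K}
    (hUnit : ∀ t, U t ∈ unitaryGroup n K) (hU : HasDerivAt U U' x) :
    (U x)ᴴ * U' ∈ skewAdjoint (Matrix n n K) := by
  have hprod : HasDerivAt (fun t => (U t)ᴴ * U t) (U'ᴴ * U x + (U x)ᴴ * U') x :=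
    hU.matrix_conjTranspose.matrix_mul hU
  have hone : (fun t => (U t)ᴴ * U t) = fun _ => 1 := funext fun t => (hUnit t).1
  rw [hone] at hprod
  rw [skewAdjoint.mem_iff, star_eq_conjTranspose, conjTranspose_mul, conjTranspose_conjTranspose,
    eq_neg_iff_add_eq_zero]
  exact ((hasDerivAt_const x _).unique hprod).symm

theorem HasDerivAt.matrix_comp_neg [Fintype m] [Fintype n] {A : ℝ → Matrix m n K}
    {A' : Matrix m n K} (hA : HasDerivAt A A' (-x)) : HasDerivAt (fun t => A (-t)) (-A') x := by
  rw [Matrix.hasDerivAt_iff] at *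
  exact fun i j => by simpa [Function.comp_def] using (hA i j).scomp x (hasDerivAt_neg x)

theorem antiunitary_symmetry_deriv [Fintype n] {U U' : ℝ → Matrix n n K}
    {V : Matrix n n K} {η : K} (hU : ∀ t, HasDerivAt U (U' t) t)
    (hsym : ∀ t, V * (U (-t)).map (starRingEnd K) = η • (U t * V)) (x : ℝ) :
    V * (U' (-x)).map (starRingEnd K) = -η • (U' x * V) := by
  have hL : HasDerivAt (fun t => V * (U (-t)).map (starRingEnd K))
      (0 * (U (-x)).map (starRingEnd K) + V * (-U' (-x)).map (starRingEnd K)) x :=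
    (hasDerivAt_const x V).matrix_mul (hU (-x)).matrix_comp_neg.matrix_map_conj
  have hR : HasDerivAt (fun t => η • (U t * V)) (η • (U' x * V + U x * 0)) x :=
    ((hU x).matrix_mul (hasDerivAt_const x V)).fun_const_smul η
  rw [funext hsym] at hL
  have h := hL.unique hR
  simp only [Matrix.zero_mul, Matrix.mul_zero, zero_add, add_zero,
    Matrix.map_neg _ (map_neg (starRingEnd K)), Matrix.mul_neg] at h
  rw [neg_smul, ← h, neg_neg]

end Calculus

section Trace

variable {m n R : Type*}

theorem Matrix.trace_conjTranspose_map_conj_mul_map_conj [Fintype m] [Fintype n]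
    [CommSemiring R] [StarRing R] (A B : Matrix m n R) :
    ((A.map (starRingEnd R))ᴴ * B.map (starRingEnd R)).trace = star (Aᴴ * B).trace := by
  simp [Matrix.trace, Matrix.mul_apply, mul_comm, starRingEnd_apply]

theorem Matrix.conjTranspose_unitary_mul_mul_unitary_mul [Fintype m] [DecidableEq m]
    [CommRing R] [StarRing R] {V : Matrix m m R} (hV : V ∈ unitaryGroup m R)
    (X Y : Matrix m n R) :
    (V * X)ᴴ * (V * Y) = Xᴴ * Y := by
  have hVV : Vᴴ * V = 1 := hV.1
  rw [conjTranspose_mul, Matrix.mul_assoc, ← Matrix.mul_assoc Vᴴ, hVV, Matrix.one_mul]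

theorem Matrix.trace_conjTranspose_mul_unitary_mul_mul_unitary [Fintype m] [Fintype n]
    [DecidableEq n] [CommRing R] [StarRing R] {V : Matrix n n R} (hV : V ∈ unitaryGroup n R)
    (X Y : Matrix m n R) :
    ((X * V)ᴴ * (Y * V)).trace = (Xᴴ * Y).trace := by
  have hVV : V * Vᴴ = 1 := hV.2
  rw [conjTranspose_mul, Matrix.mul_assoc, trace_mul_comm, Matrix.mul_assoc, Matrix.mul_assoc,
    hVV, Matrix.mul_one]

theorem Matrix.star_trace_of_mem_skewAdjoint [Fintype n] [Ring R] [StarRing R] {A : Matrix n n R}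
    (hA : A ∈ skewAdjoint (Matrix n n R)) : star A.trace = -A.trace := by
  rw [← trace_conjTranspose, ← star_eq_conjTranspose, skewAdjoint.mem_iff.1 hA, trace_neg]

end Trace

/-- For a smooth family `U k` of unitary matrices (with entrywise derivative `U' k`)
satisfying the antiunitary symmetry `U_A U(-k)* = η U(k) U_A` (`U_A` unitary, `η = ±1`),
the function `k ↦ Tr[U(k)ᴴ ∂ₖ U(k)]` is even in `k`. -/
theorem trace_log_deriv_even_of_antiunitary_symmetry {n : ℕ}
    (U U' : ℝ → Matrix (Fin n) (Fin n) ℂ) (UA : Matrix (Fin n) (Fin n) ℂ)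
    (η : ℂ) (hη : η = 1 ∨ η = -1)
    (hUA : UA ∈ Matrix.unitaryGroup (Fin n) ℂ)
    (hUk : ∀ k, U k ∈ Matrix.unitaryGroup (Fin n) ℂ)
    (hderiv : ∀ k i j, HasDerivAt (fun t => U t i j) (U' k i j) k)
    (hsym : ∀ k, UA * (U (-k)).map (starRingEnd ℂ) = η • (U k * UA)) :
    ∀ k : ℝ, ((U (-k)).conjTranspose * U' (-k)).trace
      = ((U k).conjTranspose * U' k).trace := by
  intro k
  have hU : ∀ t, HasDerivAt U (U' t) t := fun t => Matrix.hasDerivAt_iff.2 (hderiv t)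
  have hη : star η * η = 1 := by rcases hη with rfl | rfl <;> norm_num
  have hsym' := antiunitary_symmetry_deriv hU hsym k
  calc ((U (-k))ᴴ * U' (-k)).trace
      = -star ((U (-k))ᴴ * U' (-k)).trace := by
        rw [star_trace_of_mem_skewAdjoint ((hU (-k)).conjTranspose_mul_mem_skewAdjoint hUk),
          neg_neg]
    _ = -((UA * (U (-k)).map (starRingEnd ℂ))ᴴ
          * (UA * (U' (-k)).map (starRingEnd ℂ))).trace := by
        rw [conjTranspose_unitary_mul_mul_unitary_mul hUA,
          trace_conjTranspose_map_conj_mul_map_conj]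
    _ = -((η • (U k * UA))ᴴ * (-η • (U' k * UA))).trace := by rw [hsym, hsym']
    _ = star η * η * ((U k * UA)ᴴ * (U' k * UA)).trace := by
        simp only [conjTranspose_smul, Matrix.smul_mul, Matrix.mul_smul, trace_smul, smul_smul,
          smul_eq_mul, neg_mul, neg_neg, mul_comm η]
    _ = ((U k)ᴴ * U' k).trace := by
        rw [hη, one_mul, trace_conjTranspose_mul_unitary_mul_mul_unitary hUA]
end

section
/- The winding number of the function f(k) = J_R e^{-ik} + J_L e^{ik} around the origin, as k runs from -π to π, equals 1 if |J_R| < |J_L| and -1 if |J_R| > |J_L|. -/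
/-!
For `‖J_R‖ < ‖J_L‖` write `J_R = z J_L` with `‖z‖ < 1`, so that
`f(k) = J_L e^{ik} g(k)` with `g(k) = 1 + z e^{-2ik}`. Then `f'/f = i + g'/g`, and since `g`
takes values in the disc of radius 1 around 1, `log ∘ g` is a periodic primitive of `g'/g`;
the winding integral is therefore `∫ i = 2πi`. The case `‖J_L‖ < ‖J_R‖` follows from the
symmetry `k ↦ -k`, which exchanges `J_R` and `J_L` and reverses orientation.
-/

open Complex Real intervalIntegral

theorem integral_div_eq_zero_of_mem_slitPlane {g g' : ℝ → ℂ} {a b : ℝ}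
    (hg : ∀ x ∈ Set.uIcc a b, HasDerivAt g (g' x) x) (hg' : ContinuousOn g' (Set.uIcc a b))
    (hslit : ∀ x ∈ Set.uIcc a b, g x ∈ slitPlane) (hab : g a = g b) :
    ∫ x in a..b, g' x / g x = 0 := by
  have hint : IntervalIntegrable (fun x => g' x / g x) MeasureTheory.volume a b :=
    (hg'.div (fun x hx => (hg x hx).continuousAt.continuousWithinAt)
      fun x hx => slitPlane_ne_zero (hslit x hx)).intervalIntegrable
  rw [integral_eq_sub_of_hasDerivAt (fun x hx => (hg x hx).clog_real (hslit x hx)) hint, hab,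
    sub_self]

theorem hasDerivAt_exp_mul_ofReal (c : ℂ) (x : ℝ) :
    HasDerivAt (fun x : ℝ => exp (c * x)) (c * exp (c * x)) x := by
  simpa [mul_comm] using ((hasDerivAt_id (x : ℂ)).const_mul c).cexp.comp_ofReal

theorem div_eq_I_add_div {z J u : ℂ} (hu : u ≠ 0) (hJ : J ≠ 0) (hg : 1 + z * u ^ 2 ≠ 0) :
    (-I * (z * J) * u + I * J * u⁻¹) / (z * J * u + J * u⁻¹)
      = I + z * (-2 * I * u ^ 2) / (1 + z * u ^ 2) := by
  have hf : z * J * u + J * u⁻¹ = J * (1 + z * u ^ 2) / u := by field_simp; ring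
  rw [hf]
  field_simp
  ring

noncomputable def windingIntegrand (JR JL : ℂ) (k : ℝ) : ℂ :=
  (-I * JR * exp (-I * k) + I * JL * exp (I * k)) / (JR * exp (-I * k) + JL * exp (I * k))

theorem windingIntegrand_neg (JR JL : ℂ) (k : ℝ) :
    windingIntegrand JR JL (-k) = -windingIntegrand JL JR k := by
  simp only [windingIntegrand, ofReal_neg, mul_neg, neg_mul, neg_neg]
  ring

theorem integral_windingIntegrand_swap (JR JL : ℂ) :
    ∫ k in (-π)..π, windingIntegrand JR JL k = -∫ k in (-π)..π, windingIntegrand JL JR k := by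
  have hneg (k : ℝ) : windingIntegrand JR JL k = -windingIntegrand JL JR (-k) := by
    rw [← windingIntegrand_neg, neg_neg]
  simp_rw [hneg, integral_neg, integral_comp_neg, neg_neg]

theorem integral_windingIntegrand_of_norm_lt {JR JL : ℂ} (h : ‖JR‖ < ‖JL‖) :
    ∫ k in (-π)..π, windingIntegrand JR JL k = 2 * π * I := by
  have hJL : JL ≠ 0 := norm_pos_iff.1 ((norm_nonneg JR).trans_lt h)
  obtain ⟨z, rfl⟩ : ∃ z, JR = z * JL := ⟨JR / JL, (div_mul_cancel₀ JR hJL).symm⟩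
  have hz : ‖z‖ < 1 := by rwa [norm_mul, mul_lt_iff_lt_one_left (norm_pos_iff.2 hJL)] at h
  set g : ℝ → ℂ := fun k => 1 + z * exp (-2 * I * k)
  set g' : ℝ → ℂ := fun k => z * (-2 * I * exp (-2 * I * k))
  have hslit (k : ℝ) : g k ∈ slitPlane := by
    refine mem_slitPlane_of_norm_lt_one ?_
    rwa [norm_mul, show -2 * I * k = ((-2 * k : ℝ) : ℂ) * I by push_cast; ring,
      norm_exp_ofReal_mul_I, mul_one]
  have hsplit (k : ℝ) : windingIntegrand (z * JL) JL k = I + g' k / g k := by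
    have hsq : exp (-2 * I * k) = exp (-I * k) ^ 2 := by rw [← Complex.exp_nat_mul]; ring_nf
    have hinv : exp (I * k) = (exp (-I * k))⁻¹ := by rw [← Complex.exp_neg, neg_mul, neg_neg]
    have hg := slitPlane_ne_zero (hslit k)
    simp only [g, g', hsq] at hg ⊢
    rw [windingIntegrand, hinv, div_eq_I_add_div (exp_ne_zero _) hJL hg]
  have hg_cont : Continuous (fun k => g' k / g k) :=
    Continuous.div (by fun_prop) (by fun_prop) fun k => slitPlane_ne_zero (hslit k)
  have hg_int : ∫ k in (-π)..π, g' k / g k = 0 := by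
    refine integral_div_eq_zero_of_mem_slitPlane (fun k _ => ?_)
      (Continuous.continuousOn (by fun_prop)) (fun k _ => hslit k) ?_
    · exact ((hasDerivAt_exp_mul_ofReal _ k).const_mul z).const_add 1
    · have hπ : exp (-2 * I * π) = 1 := exp_eq_one_iff.2 ⟨-1, by push_cast; ring⟩
      have hnegπ : exp (-2 * I * ↑(-π)) = 1 := exp_eq_one_iff.2 ⟨1, by push_cast; ring⟩
      simp only [g, hπ, hnegπ]
  simp_rw [hsplit]
  rw [integral_add intervalIntegrable_const (hg_cont.intervalIntegrable _ _), hg_int,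
    integral_const, sub_neg_eq_add, real_smul, add_zero]
  push_cast
  ring

/-- The winding number of `f(k) = J_R e^{-ik} + J_L e^{ik}` around the origin as `k`
runs from `-π` to `π` equals `1` if `|J_R| < |J_L|` and `-1` if `|J_R| > |J_L|`:
`∫_{-π}^{π} (dk/2πi) f'(k)/f(k) = ±1`. -/
theorem winding_number_asymmetric_hopping (JR JL : ℂ) :
    (‖JR‖ < ‖JL‖ →
      (∫ k in (-Real.pi)..Real.pi,
          (-Complex.I * JR * Complex.exp (-Complex.I * k)
            + Complex.I * JL * Complex.exp (Complex.I * k)) /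
          (JR * Complex.exp (-Complex.I * k) + JL * Complex.exp (Complex.I * k)))
        = 2 * Real.pi * Complex.I) ∧
    (‖JL‖ < ‖JR‖ →
      (∫ k in (-Real.pi)..Real.pi,
          (-Complex.I * JR * Complex.exp (-Complex.I * k)
            + Complex.I * JL * Complex.exp (Complex.I * k)) /
          (JR * Complex.exp (-Complex.I * k) + JL * Complex.exp (Complex.I * k)))
        = -(2 * Real.pi * Complex.I)) :=
  ⟨integral_windingIntegrand_of_norm_lt, fun h =>
    (integral_windingIntegrand_swap JR JL).trans
      (congrArg Neg.neg (integral_windingIntegrand_of_norm_lt h))⟩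
end

section
/- Let H be a Hermitian matrix with eigenvalues E_j and let E ∈ ℝ with d = min_j |E_j - E| > 0 and D = max_j |E_j - E|. Then for every unit vector ψ and every t with 0 < t < π/D, one has ‖e^{-iHt}ψ - e^{-iEt}ψ‖ > (2d/π) t. -/
/-!
In the eigenbasis of `H`, the operator `e^{-iHt} - e^{-iEt}` is diagonal with entries
`e^{-iE_j t} - e^{-iEt}`, chords of the unit circle subtending the angle `t |E_j - E| < π`.
By Jordan's inequality such a chord is longer than `(2/π) t |E_j - E| ≥ (2d/π) t`, and a diagonal
operator all of whose entries exceed `m` in modulus stretches every nonzero vector by more than `m`.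
-/

open Real

theorem Real.mul_abs_lt_abs_sin {x : ℝ} (hx₀ : x ≠ 0) (hx : |x| < π / 2) :
    2 / π * |x| < |sin x| := by
  rw [abs_sin_eq_sin_abs_of_abs_le_pi (by linarith [pi_pos])]
  exact mul_lt_sin (abs_pos.2 hx₀) hx

theorem Complex.two_div_pi_mul_abs_sub_lt_norm_exp_sub_exp {a b : ℝ} (hab : a ≠ b)
    (h : |a - b| < π) :
    2 / π * |a - b| < ‖exp (I * a) - exp (I * b)‖ := by
  have hfactor : exp (I * a) - exp (I * b) = exp (I * b) * (exp (I * ↑(a - b)) - 1) := by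
    rw [mul_sub, mul_one, ← exp_add]; push_cast; ring_nf
  rw [hfactor, norm_mul, norm_exp_I_mul_ofReal, one_mul, norm_exp_I_mul_ofReal_sub_one,
    norm_mul, Real.norm_two, Real.norm_eq_abs]
  have hjordan := Real.mul_abs_lt_abs_sin (x := (a - b) / 2) (by simpa [sub_eq_zero] using hab)
    (by rw [abs_div, abs_two]; linarith)
  rw [abs_div, abs_two] at hjordan
  linarith

theorem Complex.two_div_pi_mul_lt_norm_exp_sub_exp {t x y : ℝ} (ht : 0 < t) (hxy : x ≠ y)
    (h : t * |x - y| < π) :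
    2 / π * (t * |x - y|) < ‖exp (-(I * t) * x) - exp (-(I * t) * y)‖ := by
  have habs : |-(t * x) - -(t * y)| = t * |x - y| := by
    rw [show -(t * x) - -(t * y) = -(t * (x - y)) by ring, abs_neg, abs_mul, abs_of_pos ht]
  have hchord := two_div_pi_mul_abs_sub_lt_norm_exp_sub_exp (a := -(t * x)) (b := -(t * y))
    (by simpa [ht.ne'] using hxy) (habs ▸ h)
  rw [habs] at hchord
  push_cast at hchord
  ring_nf at hchord ⊢
  exact hchord

theorem NormedSpace.exp_apply_of_apply_eq_smul {𝕂 V : Type*} [RCLike 𝕂] [NormedAddCommGroup V]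
    [NormedSpace 𝕂 V] [CompleteSpace V] {T : V →L[𝕂] V} {μ : 𝕂} {v : V} (h : T v = μ • v) :
    exp T v = exp μ • v := by
  have hpow (k : ℕ) : (T ^ k) v = μ ^ k • v := by
    induction k with
    | zero => simp
    | succ k ih => rw [pow_succ', mul_apply_eq_comp, ih, map_smul, h, smul_smul, pow_succ]
  have hT := ((exp_series_hasSum_exp' (𝕂 := 𝕂) T).mapL (ContinuousLinearMap.apply 𝕂 V v))
  have hμ := (exp_series_hasSum_exp' (𝕂 := 𝕂) μ).smul_const v
  refine hT.unique (hμ.congr_fun fun k => ?_)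
  simp [hpow, smul_smul]

open scoped Matrix.Norms.L2Operator in
theorem Matrix.toEuclideanCLM_exp {𝕜 n : Type*} [RCLike 𝕜] [Fintype n] [DecidableEq n]
    (M : Matrix n n 𝕜) :
    toEuclideanCLM (𝕜 := 𝕜) (NormedSpace.exp M) = NormedSpace.exp (toEuclideanCLM (𝕜 := 𝕜) M) :=
  NormedSpace.map_exp_of_mem_ball (𝕂 := 𝕜) (toEuclideanCLM : Matrix n n 𝕜 ≃⋆ₐ[𝕜] _)
    (LinearMap.continuous_of_finiteDimensional
      (toEuclideanCLM : Matrix n n 𝕜 ≃⋆ₐ[𝕜] _).toAlgEquiv.toLinearMap) M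
    ((NormedSpace.expSeries_radius_eq_top 𝕜 (Matrix n n 𝕜)).symm ▸ edist_lt_top _ _)

theorem Matrix.IsHermitian.toEuclideanCLM_exp_smul_eigenvectorBasis {n : Type*} [Fintype n]
    [DecidableEq n] {H : Matrix n n ℂ} (hH : H.IsHermitian) (s : ℂ) (j : n) :
    toEuclideanCLM (𝕜 := ℂ) (NormedSpace.exp (s • H)) (hH.eigenvectorBasis j) =
      Complex.exp (s * hH.eigenvalues j) • hH.eigenvectorBasis j := by
  rw [Matrix.toEuclideanCLM_exp, Complex.exp_eq_exp_ℂ]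
  refine NormedSpace.exp_apply_of_apply_eq_smul ?_
  apply WithLp.ofLp_injective
  simp [Matrix.ofLp_toEuclideanCLM, hH.mulVec_eigenvectorBasis, ← Complex.coe_smul, smul_smul]

namespace OrthonormalBasis

variable {ι 𝕜 E : Type*} [Fintype ι] [RCLike 𝕜] [NormedAddCommGroup E] [InnerProductSpace 𝕜 E]
  (b : OrthonormalBasis ι 𝕜 E) {T : E →ₗ[𝕜] E} {μ : ι → 𝕜}

theorem norm_sq_apply_of_apply_eq_smul (hT : ∀ i, T (b i) = μ i • b i) (x : E) :
    ‖T x‖ ^ 2 = ∑ i, ‖μ i‖ ^ 2 * ‖b.repr x i‖ ^ 2 := by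
  have hTx : T x = b.repr.symm (WithLp.toLp 2 fun i => μ i * b.repr x i) := by
    conv_lhs => rw [← b.sum_repr x]
    simp only [← b.sum_repr_symm, map_sum, map_smul, hT, smul_smul, mul_comm]
  simp [hTx, EuclideanSpace.norm_sq_eq, mul_pow]

theorem mul_norm_lt_norm_apply (hT : ∀ i, T (b i) = μ i • b i) {m : ℝ} (hm₀ : 0 ≤ m)
    (hm : ∀ i, m < ‖μ i‖) {x : E} (hx : x ≠ 0) : m * ‖x‖ < ‖T x‖ := by
  obtain ⟨j, hj⟩ : ∃ j, b.repr x j ≠ 0 := by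
    by_contra! h
    exact hx (b.repr.map_eq_zero_iff.1 (by ext i; simp [h]))
  refine lt_of_pow_lt_pow_left₀ 2 (norm_nonneg _) ?_
  calc (m * ‖x‖) ^ 2 = ∑ i, m ^ 2 * ‖b.repr x i‖ ^ 2 := by
        rw [mul_pow, ← Finset.mul_sum, ← b.repr.norm_map, EuclideanSpace.norm_sq_eq]
    _ < ∑ i, ‖μ i‖ ^ 2 * ‖b.repr x i‖ ^ 2 := by
        refine Finset.sum_lt_sum (fun i _ => ?_) ⟨j, Finset.mem_univ j, ?_⟩
        · gcongr; exact (hm i).le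
        · gcongr; exact hm j
    _ = ‖T x‖ ^ 2 := (b.norm_sq_apply_of_apply_eq_smul hT x).symm

end OrthonormalBasis

/-- In a Hermitian system, no quasi-eigenstate exists at an energy `E` separated from the
spectrum: if `H` is Hermitian with eigenvalues `E_j`, `d > 0` is a lower bound and `D` an
upper bound for `|E_j - E|`, then for every unit vector `ψ` and every `0 < t < π/D`,
`‖e^{-iHt} ψ - e^{-iEt} ψ‖ > (2d/π) t`. -/
theorem hermitian_no_quasi_eigenstate {n : ℕ}
    (H : Matrix (Fin n) (Fin n) ℂ) (hH : H.IsHermitian) (E d D : ℝ)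
    (hd : 0 < d) (hdle : ∀ j, d ≤ |hH.eigenvalues j - E|)
    (hDle : ∀ j, |hH.eigenvalues j - E| ≤ D)
    (ψ : EuclideanSpace ℂ (Fin n)) (hψ : ‖ψ‖ = 1)
    (t : ℝ) (ht0 : 0 < t) (htD : t < Real.pi / D) :
    2 * d / Real.pi * t <
      ‖(Matrix.toEuclideanCLM (𝕜 := ℂ) (NormedSpace.exp ((-(Complex.I * t)) • H))) ψ
        - Complex.exp (-(Complex.I * E * t)) • ψ‖ := by
  have hD : 0 < D := by
    by_contra! hD
    exact (div_nonpos_of_nonneg_of_nonpos pi_pos.le hD).not_gt (ht0.trans htD)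
  set phase : ℝ → ℂ := fun x => Complex.exp (-(Complex.I * t) * x)
  rw [show Complex.exp (-(Complex.I * E * t)) = phase E by simp only [phase]; ring_nf]
  set T := Matrix.toEuclideanCLM (𝕜 := ℂ) (NormedSpace.exp ((-(Complex.I * t)) • H)) -
    phase E • ContinuousLinearMap.id ℂ (EuclideanSpace ℂ (Fin n))
  have hT (j : Fin n) :
      T (hH.eigenvectorBasis j) = (phase (hH.eigenvalues j) - phase E) • hH.eigenvectorBasis j := by
    simp only [T, phase, sub_apply, smul_apply, ContinuousLinearMap.id_apply,
      hH.toEuclideanCLM_exp_smul_eigenvectorBasis, sub_smul]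
  have hgap (j : Fin n) : 2 * d / π * t < ‖phase (hH.eigenvalues j) - phase E‖ := by
    calc 2 * d / π * t = 2 / π * (t * d) := by ring
      _ ≤ 2 / π * (t * |hH.eigenvalues j - E|) := by gcongr; exact hdle j
      _ < ‖phase (hH.eigenvalues j) - phase E‖ :=
        Complex.two_div_pi_mul_lt_norm_exp_sub_exp ht0
          (sub_ne_zero.1 (abs_pos.1 (hd.trans_le (hdle j))))
          ((mul_le_mul_of_nonneg_left (hDle j) ht0.le).trans_lt ((lt_div_iff₀ hD).1 htD))
  have hψ₀ : ψ ≠ 0 := norm_ne_zero_iff.1 (by simp [hψ])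
  have hlower := hH.eigenvectorBasis.mul_norm_lt_norm_apply (T := T.toLinearMap) hT
    (by positivity) hgap hψ₀
  rwa [hψ, mul_one] at hlower
end

section
/- Let H be a Hermitian matrix acting on a Hilbert space, let ψ₁, …, ψ_D be unit vectors with ‖Hψ_n‖ < ε₁ for all n and |⟨ψ_m, ψ_n⟩| < ε₂ for all m ≠ n, where (D-1)ε₂ < 1. Then the ψ_n are linearly independent, and for every unit vector ψ in their span, ‖Hψ‖ < √D · ε₁ / √(1 - (D-1)ε₂). -/
/-!
Expanding `‖∑ cⱼ ψⱼ‖²` and bounding each off-diagonal Gram entry by `ε₂` gives, via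
`(∑ |cⱼ|)² ≤ D ∑ |cⱼ|²`, the lower frame bound `(1 - (D-1)ε₂) ∑ |cⱼ|² ≤ ‖∑ cⱼ ψⱼ‖²`; this is
linear independence. For a unit vector `φ = ∑ cⱼ ψⱼ` it bounds `∑ |cⱼ|²` by `1 / (1 - (D-1)ε₂)`,
and then `‖H φ‖ ≤ ∑ |cⱼ| ‖H ψⱼ‖ < ε₁ ∑ |cⱼ| ≤ ε₁ √D (∑ |cⱼ|²)^(1/2)`.
-/

open Finset RCLike

theorem sum_offDiag_mul_le_card_sub_one_mul_sum_sq {ι : Type*} [Fintype ι] [DecidableEq ι]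
    (a : ι → ℝ) :
    ∑ i, ∑ j ∈ univ.erase i, a i * a j ≤ ((Fintype.card ι : ℝ) - 1) * ∑ i, a i ^ 2 := by
  have hoff : ∑ i, ∑ j ∈ univ.erase i, a i * a j = (∑ i, a i) ^ 2 - ∑ i, a i ^ 2 := by
    simp_rw [← mul_sum, sum_erase_eq_sub (mem_univ _), mul_sub, sum_sub_distrib, sq, sum_mul]
  rw [hoff, sub_one_mul]
  gcongr
  simpa using sq_sum_le_card_mul_sum_sq (s := univ) (f := a)

theorem sum_le_sqrt_card_div_sqrt {ι : Type*} [Fintype ι] (a : ι → ℝ) {β : ℝ} (hβ : 0 < β)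
    (h : β * ∑ i, a i ^ 2 ≤ 1) :
    ∑ i, a i ≤ √(Fintype.card ι) / √β := by
  rw [← Real.sqrt_div (Nat.cast_nonneg _)]
  refine (le_abs_self _).trans (Real.abs_le_sqrt ?_)
  rw [le_div_iff₀ hβ]
  calc (∑ i, a i) ^ 2 * β ≤ Fintype.card ι * (∑ i, a i ^ 2) * β := by
        gcongr
        simpa using sq_sum_le_card_mul_sum_sq (s := univ) (f := a)
    _ ≤ Fintype.card ι := by nlinarith

theorem norm_sum_smul_lt_mul_sum_norm {𝕜 F : Type*} [NormedField 𝕜] [SeminormedAddCommGroup F]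
    [NormedSpace 𝕜 F] {ι : Type*} [Fintype ι] {w : ι → F} {ε : ℝ} (hw : ∀ i, ‖w i‖ < ε)
    {c : ι → 𝕜} (hc : c ≠ 0) :
    ‖∑ i, c i • w i‖ < ε * ∑ i, ‖c i‖ := by
  obtain ⟨i₀, hi₀⟩ := Function.ne_iff.1 hc
  calc ‖∑ i, c i • w i‖ ≤ ∑ i, ‖c i‖ * ‖w i‖ := (norm_sum_le _ _).trans_eq (by simp [norm_smul])
    _ < ∑ i, ‖c i‖ * ε := by
        refine sum_lt_sum (fun i _ => ?_) ⟨i₀, mem_univ _, ?_⟩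
        · exact mul_le_mul_of_nonneg_left (hw i).le (norm_nonneg _)
        · exact mul_lt_mul_of_pos_left (hw i₀) (norm_pos_iff.2 hi₀)
    _ = ε * ∑ i, ‖c i‖ := by rw [mul_sum]; simp_rw [mul_comm]

section InnerProductSpace

variable {𝕜 E : Type*} [RCLike 𝕜] [NormedAddCommGroup E] [InnerProductSpace 𝕜 E]
  {ι : Type*} [Fintype ι]

local notation "⟪" x ", " y "⟫" => inner 𝕜 x y

theorem sum_norm_sq_sub_sum_offDiag_le_norm_sum_sq [DecidableEq ι] (w : ι → E) :
    ∑ i, ‖w i‖ ^ 2 - ∑ i, ∑ j ∈ univ.erase i, ‖⟪w i, w j⟫‖ ≤ ‖∑ i, w i‖ ^ 2 := by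
  have hdiag (i : ι) : ‖w i‖ ^ 2 - ∑ j ∈ univ.erase i, ‖⟪w i, w j⟫‖ ≤ ∑ j, re ⟪w i, w j⟫ := by
    rw [← add_sum_erase _ _ (mem_univ i), inner_self_eq_norm_sq, sub_eq_add_neg,
      ← sum_neg_distrib]
    gcongr with j
    exact neg_le_of_abs_le (abs_re_le_norm _)
  calc ∑ i, ‖w i‖ ^ 2 - ∑ i, ∑ j ∈ univ.erase i, ‖⟪w i, w j⟫‖
      ≤ ∑ i, ∑ j, re ⟪w i, w j⟫ := by rw [← sum_sub_distrib]; exact sum_le_sum fun i _ => hdiag i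
    _ = ‖∑ i, w i‖ ^ 2 := by
      rw [← inner_self_eq_norm_sq (𝕜 := 𝕜), sum_inner, map_sum]
      simp_rw [inner_sum, map_sum]

theorem one_sub_mul_sum_norm_sq_le_norm_sum_smul_sq {v : ι → E} {ε : ℝ}
    (hv : ∀ i, ‖v i‖ = 1) (hε : Pairwise fun i j => ‖⟪v i, v j⟫‖ ≤ ε) (c : ι → 𝕜) :
    (1 - ((Fintype.card ι : ℝ) - 1) * ε) * ∑ i, ‖c i‖ ^ 2 ≤ ‖∑ i, c i • v i‖ ^ 2 := by
  classical
  -- with at most one vector `ε` may be negative, so this case is separate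
  rcases subsingleton_or_nontrivial ι with hι | hι
  · rcases isEmpty_or_nonempty ι with hι' | ⟨⟨i⟩⟩
    · simp
    · simp [Fintype.card_eq_one_iff.2 ⟨i, (Subsingleton.elim · i)⟩, Fintype.sum_subsingleton _ i,
        norm_smul, hv]
  obtain ⟨i₀, j₀, hij₀⟩ := exists_pair_ne ι
  have hε₀ : 0 ≤ ε := (norm_nonneg _).trans (hε hij₀)
  have hoff : ∑ i, ∑ j ∈ univ.erase i, ‖⟪c i • v i, c j • v j⟫‖
      ≤ ε * ∑ i, ∑ j ∈ univ.erase i, ‖c i‖ * ‖c j‖ := by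
    simp_rw [mul_sum]
    gcongr with i _ j hj
    rw [inner_smul_left, inner_smul_right, norm_mul, norm_mul, norm_conj, ← mul_assoc,
      mul_comm ε]
    gcongr
    exact hε (ne_of_mem_erase hj).symm
  have hsum := sum_norm_sq_sub_sum_offDiag_le_norm_sum_sq (𝕜 := 𝕜) fun i => c i • v i
  simp only [norm_smul, hv, mul_one] at hsum
  nlinarith [sum_offDiag_mul_le_card_sub_one_mul_sum_sq fun i => ‖c i‖]

theorem linearIndependent_of_mul_sum_norm_sq_le {v : ι → E} {β : ℝ} (hβ : 0 < β)
    (h : ∀ c : ι → 𝕜, β * ∑ i, ‖c i‖ ^ 2 ≤ ‖∑ i, c i • v i‖ ^ 2) :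
    LinearIndependent 𝕜 v := by
  refine Fintype.linearIndependent_iff.2 fun c hc i => norm_eq_zero.1 ?_
  have hzero : ∑ j, ‖c j‖ ^ 2 = 0 :=
    le_antisymm (by nlinarith [h c, hc ▸ norm_zero (E := E)]) (by positivity)
  simpa using (sum_eq_zero_iff_of_nonneg fun j _ => sq_nonneg ‖c j‖).1 hzero i (mem_univ i)

end InnerProductSpace

theorem almost_orthonormal_span_bound_general {n D : ℕ}
    (H : EuclideanSpace ℂ (Fin n) →L[ℂ] EuclideanSpace ℂ (Fin n))
    (ε₁ ε₂ : ℝ) (ψ : Fin D → EuclideanSpace ℂ (Fin n))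
    (hunit : ∀ j, ‖ψ j‖ = 1)
    (hsmall : ∀ j, ‖H (ψ j)‖ < ε₁)
    (hortho : ∀ m j, m ≠ j → ‖(inner ℂ (ψ m) (ψ j) : ℂ)‖ < ε₂)
    (hε₂ : ((D : ℝ) - 1) * ε₂ < 1) :
    LinearIndependent ℂ ψ ∧
      ∀ φ ∈ Submodule.span ℂ (Set.range ψ), ‖φ‖ = 1 →
        ‖H φ‖ < Real.sqrt D * ε₁ / Real.sqrt (1 - ((D : ℝ) - 1) * ε₂) := by
  have hβ : 0 < 1 - ((D : ℝ) - 1) * ε₂ := by linarith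
  have hframe (c : Fin D → ℂ) := Fintype.card_fin D ▸
    one_sub_mul_sum_norm_sq_le_norm_sum_smul_sq hunit (fun m j hmj => (hortho m j hmj).le) c
  refine ⟨linearIndependent_of_mul_sum_norm_sq_le hβ hframe, fun φ hφ hφ₁ => ?_⟩
  obtain ⟨c, rfl⟩ := (Submodule.mem_span_range_iff_exists_fun ℂ).1 hφ
  have hc : c ≠ 0 := by rintro rfl; simp at hφ₁
  obtain ⟨j, -⟩ := Function.ne_iff.1 hc
  have hε₁ : 0 ≤ ε₁ := (norm_nonneg _).trans (hsmall j).le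
  calc ‖H (∑ j, c j • ψ j)‖ < ε₁ * ∑ j, ‖c j‖ := by
        simpa only [map_sum, map_smul] using norm_sum_smul_lt_mul_sum_norm hsmall hc
    _ ≤ ε₁ * (√D / √(1 - ((D : ℝ) - 1) * ε₂)) := by
        gcongr
        simpa using sum_le_sqrt_card_div_sqrt (fun j => ‖c j‖) hβ (by simpa [hφ₁] using hframe c)
    _ = √D * ε₁ / √(1 - ((D : ℝ) - 1) * ε₂) := by ring

/-- Almost-orthonormal almost-null vectors: if `ψ₁, …, ψ_D` are unit vectors with
`‖H ψ_n‖ < ε₁` and `|⟨ψ_m, ψ_n⟩| < ε₂` for `m ≠ n`, where `(D-1) ε₂ < 1`, then the `ψ_n`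
are linearly independent and every unit vector `ψ` in their span satisfies
`‖H ψ‖ < √D ε₁ / √(1 - (D-1) ε₂)`. -/
theorem almost_orthonormal_span_bound {n D : ℕ}
    (H : EuclideanSpace ℂ (Fin n) →L[ℂ] EuclideanSpace ℂ (Fin n))
    (hHsa : IsSelfAdjoint H)
    (ε₁ ε₂ : ℝ) (ψ : Fin D → EuclideanSpace ℂ (Fin n))
    (hunit : ∀ j, ‖ψ j‖ = 1)
    (hsmall : ∀ j, ‖H (ψ j)‖ < ε₁)
    (hortho : ∀ m j, m ≠ j → ‖(inner ℂ (ψ m) (ψ j) : ℂ)‖ < ε₂)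
    (hε₂ : ((D : ℝ) - 1) * ε₂ < 1) :
    LinearIndependent ℂ ψ ∧
      ∀ φ ∈ Submodule.span ℂ (Set.range ψ), ‖φ‖ = 1 →
        ‖H φ‖ < Real.sqrt D * ε₁ / Real.sqrt (1 - ((D : ℝ) - 1) * ε₂) :=
  almost_orthonormal_span_bound_general H ε₁ ε₂ ψ hunit hsmall hortho hε₂
end

section
/- Let H be an n×n complex matrix and suppose there exist D orthonormality-almost unit vectors ψ₁,…,ψ_D with ‖Hψ_j‖ < ε₁ and |⟨ψ_m,ψ_n⟩| < ε₂ < 1/(D-1) for m ≠ n. Set E_b = D ε₁ / √(1 - (D-1)ε₂). Then √(H†H) has at least D eigenvalues (with multiplicity) strictly less than E_b. -/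
open scoped ComplexOrder

/-- The square root of a positive semidefinite matrix, as defined in Mathlib (Dec 2024). -/
noncomputable def Matrix.PosSemidef.sqrt {n 𝕜 : Type*} [Fintype n] [DecidableEq n] [RCLike 𝕜]
    {A : Matrix n n 𝕜} (hA : A.PosSemidef) : Matrix n n 𝕜 :=
  hA.1.eigenvectorUnitary.1 * Matrix.diagonal ((↑) ∘ (Real.sqrt ∘ hA.1.eigenvalues)) *
    (star hA.1.eigenvectorUnitary : Matrix n n 𝕜)

theorem Matrix.PosSemidef.posSemidef_sqrt {n 𝕜 : Type*} [Fintype n] [DecidableEq n] [RCLike 𝕜]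
    {A : Matrix n n 𝕜} (hA : A.PosSemidef) : hA.sqrt.PosSemidef := by
  unfold Matrix.PosSemidef.sqrt
  exact (Matrix.posSemidef_diagonal_iff.mpr fun i => by simp [Real.sqrt_nonneg]).mul_mul_conjTranspose_same _

/-!
If the unit vectors `ψ j` are pairwise `ε₂`-almost orthogonal, their Gram form is bounded below by
`d = 1 - (D - 1) ε₂ > 0` (a Gershgorin estimate), so they span a `D`-dimensional space `V`, and for
`v = ∑ c j • ψ j ∈ V` Cauchy–Schwarz gives `‖H v‖ ≤ ε₁ ∑ ‖c j‖ ≤ ε₁ √D ‖v‖ / √d ≤ E_b ‖v‖`,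
with strict inequality for `v ≠ 0`. On the other hand `‖H v‖ = ‖√(Hᴴ H) v‖ ≥ E_b ‖v‖` whenever `v`
is orthogonal to the eigenvectors of `√(Hᴴ H)` with eigenvalue `< E_b`. With fewer than `D` such
eigenvectors, a dimension count produces a nonzero `v ∈ V` orthogonal to all of them.
-/

open scoped InnerProductSpace ComplexConjugate Matrix

section AlmostOrthonormal

variable {𝕜 E ι : Type*} [RCLike 𝕜] [NormedAddCommGroup E] [InnerProductSpace 𝕜 E]
  {ψ : ι → E} {ε : ℝ}

/-- The left side is shaped so that summing over `m` and `j` gives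
`(1 - (card ι - 1) * ε) * ∑ j, ‖c j‖ ^ 2`; off the diagonal it is AM-GM. -/
theorem le_re_conj_mul_mul_inner [DecidableEq ι] (hunit : ∀ j, ‖ψ j‖ = 1)
    (hortho : ∀ m j, m ≠ j → ‖⟪ψ m, ψ j⟫_𝕜‖ ≤ ε) (c : ι → 𝕜) (m j : ι) :
    (1 + ε) * (if m = j then ‖c m‖ ^ 2 else 0) - ε / 2 * (‖c m‖ ^ 2 + ‖c j‖ ^ 2) ≤
      RCLike.re (conj (c m) * c j * ⟪ψ m, ψ j⟫_𝕜) := by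
  rcases eq_or_ne m j with rfl | hmj
  · rw [inner_self_eq_norm_sq_to_K, hunit, RCLike.conj_mul, if_pos rfl]
    rw [RCLike.ofReal_one, one_pow, mul_one, ← RCLike.ofReal_pow, RCLike.ofReal_re]
    linarith
  · have hε : 0 ≤ ε := (norm_nonneg _).trans (hortho m j hmj)
    have hamgm : ‖c m‖ * ‖c j‖ ≤ (‖c m‖ ^ 2 + ‖c j‖ ^ 2) / 2 := by
      nlinarith [sq_nonneg (‖c m‖ - ‖c j‖)]
    calc _ = -(ε * ((‖c m‖ ^ 2 + ‖c j‖ ^ 2) / 2)) := by rw [if_neg hmj]; ring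
      _ ≤ -(ε * (‖c m‖ * ‖c j‖)) := by gcongr
      _ ≤ -‖conj (c m) * c j * ⟪ψ m, ψ j⟫_𝕜‖ := by
        rw [norm_mul, norm_mul, RCLike.norm_conj, mul_comm ε]
        gcongr
        exact hortho m j hmj
      _ ≤ _ := neg_le_of_abs_le (RCLike.abs_re_le_norm _)

variable [Fintype ι]

theorem mul_sum_norm_sq_le_norm_sum_smul_sq (hunit : ∀ j, ‖ψ j‖ = 1)
    (hortho : ∀ m j, m ≠ j → ‖⟪ψ m, ψ j⟫_𝕜‖ ≤ ε) (c : ι → 𝕜) :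
    (1 - (Fintype.card ι - 1) * ε) * ∑ j, ‖c j‖ ^ 2 ≤ ‖∑ j, c j • ψ j‖ ^ 2 := by
  have hexpand : ‖∑ j, c j • ψ j‖ ^ 2 =
      ∑ m, ∑ j, RCLike.re (conj (c m) * c j * ⟪ψ m, ψ j⟫_𝕜) := by
    rw [← inner_self_eq_norm_sq (𝕜 := 𝕜), sum_inner, map_sum]
    simp_rw [inner_sum, map_sum, inner_smul_left, inner_smul_right, mul_assoc]
  classical
  rw [hexpand]
  refine le_trans (le_of_eq ?_) (Finset.sum_le_sum fun m _ => Finset.sum_le_sum fun j _ =>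
    le_re_conj_mul_mul_inner hunit hortho c m j)
  simp only [Finset.sum_sub_distrib, ← Finset.mul_sum, Finset.sum_add_distrib, Finset.sum_ite_eq,
    Finset.mem_univ, if_true, Finset.sum_const, Finset.card_univ, nsmul_eq_mul]
  ring

theorem linearIndependent_of_norm_inner_le (hunit : ∀ j, ‖ψ j‖ = 1)
    (hortho : ∀ m j, m ≠ j → ‖⟪ψ m, ψ j⟫_𝕜‖ ≤ ε) (hε : (Fintype.card ι - 1) * ε < 1) :
    LinearIndependent 𝕜 ψ := by
  rw [Fintype.linearIndependent_iff]
  intro c hc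
  have hsum : ∑ j, ‖c j‖ ^ 2 ≤ 0 := by
    have := mul_sum_norm_sq_le_norm_sum_smul_sq hunit hortho c
    rw [hc, norm_zero, zero_pow two_ne_zero] at this
    exact nonpos_of_mul_nonpos_right this (by linarith)
  intro j
  simpa using (Finset.sum_eq_zero_iff_of_nonneg fun j _ => sq_nonneg ‖c j‖).1
    (le_antisymm hsum (by positivity)) j (Finset.mem_univ j)

theorem sum_norm_mul_sqrt_le_sqrt_card_mul_norm_sum_smul (hunit : ∀ j, ‖ψ j‖ = 1)
    (hortho : ∀ m j, m ≠ j → ‖⟪ψ m, ψ j⟫_𝕜‖ ≤ ε) (c : ι → 𝕜) :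
    (∑ j, ‖c j‖) * √(1 - (Fintype.card ι - 1) * ε) ≤ √(Fintype.card ι) * ‖∑ j, c j • ψ j‖ := by
  have hcs : ∑ j, ‖c j‖ ≤ √(Fintype.card ι * ∑ j, ‖c j‖ ^ 2) :=
    Real.le_sqrt_of_sq_le <| by
      simpa using sq_sum_le_card_mul_sum_sq (s := Finset.univ) (f := fun j => ‖c j‖)
  calc (∑ j, ‖c j‖) * √(1 - (Fintype.card ι - 1) * ε)
      ≤ √(Fintype.card ι * ∑ j, ‖c j‖ ^ 2) * √(1 - (Fintype.card ι - 1) * ε) := by gcongr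
    _ = √(Fintype.card ι) * √((1 - (Fintype.card ι - 1) * ε) * ∑ j, ‖c j‖ ^ 2) := by
      rw [Real.sqrt_mul (by positivity), mul_comm (1 - _), Real.sqrt_mul (by positivity), mul_assoc]
    _ ≤ √(Fintype.card ι) * √(‖∑ j, c j • ψ j‖ ^ 2) := by
      gcongr
      exact mul_sum_norm_sq_le_norm_sum_smul_sq hunit hortho c
    _ = √(Fintype.card ι) * ‖∑ j, c j • ψ j‖ := by rw [Real.sqrt_sq (norm_nonneg _)]

theorem norm_apply_mul_sqrt_le_of_mem_span {F : Type*} [NormedAddCommGroup F] [NormedSpace 𝕜 F]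
    (hunit : ∀ j, ‖ψ j‖ = 1) (hortho : ∀ m j, m ≠ j → ‖⟪ψ m, ψ j⟫_𝕜‖ ≤ ε)
    (T : E →ₗ[𝕜] F) {μ : ℝ} (hμ : 0 ≤ μ) (hT : ∀ j, ‖T (ψ j)‖ ≤ μ)
    {v : E} (hv : v ∈ Submodule.span 𝕜 (Set.range ψ)) :
    ‖T v‖ * √(1 - (Fintype.card ι - 1) * ε) ≤ √(Fintype.card ι) * μ * ‖v‖ := by
  obtain ⟨c, rfl⟩ := (Submodule.mem_span_range_iff_exists_fun 𝕜).1 hv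
  have hTv : ‖T (∑ j, c j • ψ j)‖ ≤ μ * ∑ j, ‖c j‖ := by
    rw [map_sum, Finset.mul_sum]
    refine (norm_sum_le _ _).trans (Finset.sum_le_sum fun j _ => ?_)
    rw [map_smul, norm_smul, mul_comm]
    gcongr
    exact hT j
  calc ‖T (∑ j, c j • ψ j)‖ * √(1 - (Fintype.card ι - 1) * ε)
      ≤ μ * ((∑ j, ‖c j‖) * √(1 - (Fintype.card ι - 1) * ε)) := by
        rw [← mul_assoc]; gcongr
    _ ≤ μ * (√(Fintype.card ι) * ‖∑ j, c j • ψ j‖) :=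
        mul_le_mul_of_nonneg_left
          (sum_norm_mul_sqrt_le_sqrt_card_mul_norm_sum_smul hunit hortho c) hμ
    _ = _ := by ring

theorem norm_apply_mul_sqrt_lt_of_mem_span {F : Type*} [NormedAddCommGroup F] [NormedSpace 𝕜 F]
    (hunit : ∀ j, ‖ψ j‖ = 1) (hortho : ∀ m j, m ≠ j → ‖⟪ψ m, ψ j⟫_𝕜‖ ≤ ε)
    (T : E →ₗ[𝕜] F) {ε₁ : ℝ} (hT : ∀ j, ‖T (ψ j)‖ < ε₁)
    {v : E} (hv : v ∈ Submodule.span 𝕜 (Set.range ψ)) (hv0 : v ≠ 0) :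
    ‖T v‖ * √(1 - (Fintype.card ι - 1) * ε) < √(Fintype.card ι) * ε₁ * ‖v‖ := by
  have : Nonempty ι := by
    by_contra! hι
    simp [Set.range_eq_empty, hv0] at hv
  obtain ⟨j₀, hj₀⟩ := Finite.exists_max fun j => ‖T (ψ j)‖
  calc _ ≤ √(Fintype.card ι) * ‖T (ψ j₀)‖ * ‖v‖ :=
        norm_apply_mul_sqrt_le_of_mem_span hunit hortho T (norm_nonneg _) hj₀ hv
    _ < _ := by gcongr; exact hT j₀

end AlmostOrthonormal

theorem exists_mem_ne_zero_forall_inner_eq_zero_of_card_lt {𝕜 E ι : Type*} [RCLike 𝕜]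
    [NormedAddCommGroup E] [InnerProductSpace 𝕜 E] [FiniteDimensional 𝕜 E]
    (b : ι → E) (s : Finset ι) {V : Submodule 𝕜 E} (h : s.card < Module.finrank 𝕜 V) :
    ∃ v ∈ V, v ≠ 0 ∧ ∀ i ∈ s, ⟪b i, v⟫_𝕜 = 0 := by
  classical
  set U := Submodule.span 𝕜 (s.image b : Set E)
  have hU : Module.finrank 𝕜 U ≤ s.card :=
    (finrank_span_finset_le_card _).trans Finset.card_image_le
  have hsum := Submodule.finrank_sup_add_finrank_inf_eq V Uᗮ
  have hcompl := U.finrank_add_finrank_orthogonal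
  have hsup := (V ⊔ Uᗮ).finrank_le
  obtain ⟨v, hv, hv0⟩ := Submodule.exists_mem_ne_zero_of_ne_bot (p := V ⊓ Uᗮ) fun hbot => by
    rw [hbot, finrank_bot] at hsum
    omega
  refine ⟨v, hv.1, hv0, fun i hi => Submodule.inner_right_of_mem_orthogonal ?_ hv.2⟩
  exact Submodule.subset_span (Finset.mem_coe.2 (Finset.mem_image_of_mem b hi))

section Spectral
variable {𝕜 n : Type*} [RCLike 𝕜] [Fintype n] [DecidableEq n]

theorem Matrix.norm_toEuclideanCLM_eq_of_conjTranspose_mul_self_eq {H A : Matrix n n 𝕜}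
    (h : Hᴴ * H = Aᴴ * A) (v : EuclideanSpace 𝕜 n) :
    ‖toEuclideanCLM (𝕜 := 𝕜) H v‖ = ‖toEuclideanCLM (𝕜 := 𝕜) A v‖ := by
  have hsq : ∀ M : Matrix n n 𝕜, ‖toEuclideanCLM (𝕜 := 𝕜) M v‖ ^ 2 =
      RCLike.re ⟪toEuclideanCLM (𝕜 := 𝕜) (Mᴴ * M) v, v⟫_𝕜 := fun M => by
    rw [ContinuousLinearMap.apply_norm_sq_eq_inner_adjoint_left, map_mul,
      ← Matrix.star_eq_conjTranspose, map_star, ContinuousLinearMap.star_eq_adjoint]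
    rfl
  rw [← sq_eq_sq₀ (norm_nonneg _) (norm_nonneg _), hsq, hsq, h]

theorem Matrix.IsHermitian.inner_eigenvectorBasis_toEuclideanCLM {A : Matrix n n 𝕜}
    (hA : A.IsHermitian) (v : EuclideanSpace 𝕜 n) (i : n) :
    ⟪hA.eigenvectorBasis i, toEuclideanCLM (𝕜 := 𝕜) A v⟫_𝕜 =
      hA.eigenvalues i * ⟪hA.eigenvectorBasis i, v⟫_𝕜 := by
  have hsymm : (toEuclideanLin A).IsSymmetric := isSymmetric_toEuclideanLin_iff.mpr hA
  have heig : toEuclideanLin A (hA.eigenvectorBasis i) =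
      (hA.eigenvalues i : 𝕜) • hA.eigenvectorBasis i := by
    rw [toLpLin_apply, hA.mulVec_eigenvectorBasis, RCLike.real_smul_eq_coe_smul (K := 𝕜)]
    rfl
  rw [show toEuclideanCLM (𝕜 := 𝕜) A v = toEuclideanLin A v from rfl, ← hsymm, heig,
    inner_smul_left, RCLike.conj_ofReal]

theorem Matrix.IsHermitian.mul_norm_le_norm_toEuclideanCLM {A : Matrix n n 𝕜}
    (hA : A.IsHermitian) {E : ℝ} {v : EuclideanSpace 𝕜 n}
    (hv : ∀ i, hA.eigenvalues i < E → ⟪hA.eigenvectorBasis i, v⟫_𝕜 = 0) :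
    E * ‖v‖ ≤ ‖toEuclideanCLM (𝕜 := 𝕜) A v‖ := by
  rcases lt_or_ge E 0 with hE | hE
  · nlinarith [norm_nonneg v, norm_nonneg (toEuclideanCLM (𝕜 := 𝕜) A v)]
  rw [← sq_le_sq₀ (by positivity) (norm_nonneg _), mul_pow,
    ← hA.eigenvectorBasis.sum_sq_norm_inner_right, ← hA.eigenvectorBasis.sum_sq_norm_inner_right,
    Finset.mul_sum]
  refine Finset.sum_le_sum fun i _ => ?_
  rw [hA.inner_eigenvectorBasis_toEuclideanCLM, norm_mul, mul_pow, RCLike.norm_ofReal, sq_abs]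
  rcases lt_or_ge (hA.eigenvalues i) E with hi | hi
  · simp [hv i hi]
  · gcongr

theorem Matrix.PosSemidef.sqrt_mul_self {A : Matrix n n 𝕜} (hA : A.PosSemidef) :
    hA.sqrt * hA.sqrt = A := by
  have hdiag : diagonal (RCLike.ofReal ∘ (Real.sqrt ∘ hA.1.eigenvalues)) *
      diagonal (RCLike.ofReal ∘ (Real.sqrt ∘ hA.1.eigenvalues)) =
        diagonal (RCLike.ofReal ∘ hA.1.eigenvalues : n → 𝕜) := by
    rw [diagonal_mul_diagonal]
    congr 1
    ext i
    simp [← RCLike.ofReal_mul, Real.mul_self_sqrt (hA.eigenvalues_nonneg i)]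
  conv_rhs => rw [hA.1.spectral_theorem, ← hdiag, map_mul]
  rfl

theorem Matrix.mul_norm_le_norm_toEuclideanCLM (H : Matrix n n 𝕜) {E : ℝ}
    {v : EuclideanSpace 𝕜 n}
    (hv : ∀ i, (posSemidef_conjTranspose_mul_self H).posSemidef_sqrt.1.eigenvalues i < E →
      ⟪(posSemidef_conjTranspose_mul_self H).posSemidef_sqrt.1.eigenvectorBasis i, v⟫_𝕜 = 0) :
    E * ‖v‖ ≤ ‖toEuclideanCLM (𝕜 := 𝕜) H v‖ := by
  set hH := posSemidef_conjTranspose_mul_self H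
  set hA := hH.posSemidef_sqrt.1
  rw [norm_toEuclideanCLM_eq_of_conjTranspose_mul_self_eq (by rw [hA.eq, hH.sqrt_mul_self]) v]
  exact hA.mul_norm_le_norm_toEuclideanCLM hv

end Spectral

/-- If there exist `D` almost-orthonormal unit vectors `ψ_j` with `‖H ψ_j‖ < ε₁` and
`|⟨ψ_m, ψ_j⟩| < ε₂ < 1/(D-1)` for `m ≠ j`, then setting
`E_b = D ε₁ / √(1 - (D-1) ε₂)`, the matrix `√(Hᴴ H)` has at least `D` eigenvalues
(with multiplicity) strictly less than `E_b`. -/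
theorem low_energy_eigenvalue_count {n D : ℕ}
    (H : Matrix (Fin n) (Fin n) ℂ)
    (ε₁ ε₂ : ℝ) (ψ : Fin D → EuclideanSpace ℂ (Fin n))
    (hunit : ∀ j, ‖ψ j‖ = 1)
    (hsmall : ∀ j, ‖(Matrix.toEuclideanCLM (𝕜 := ℂ) H) (ψ j)‖ < ε₁)
    (hortho : ∀ m j, m ≠ j → ‖(inner ℂ (ψ m) (ψ j) : ℂ)‖ < ε₂)
    (hε₂ : ((D : ℝ) - 1) * ε₂ < 1) :
    D ≤ (Finset.univ.filter fun j : Fin n =>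
        ((Matrix.posSemidef_conjTranspose_mul_self H).posSemidef_sqrt).1.eigenvalues j
          < (D : ℝ) * ε₁ / Real.sqrt (1 - ((D : ℝ) - 1) * ε₂)).card := by
  classical
  set hA := (Matrix.posSemidef_conjTranspose_mul_self H).posSemidef_sqrt.1
  set d := 1 - ((D : ℝ) - 1) * ε₂
  set Eb := (D : ℝ) * ε₁ / √d
  have hortho' : ∀ m j, m ≠ j → ‖⟪ψ m, ψ j⟫_ℂ‖ ≤ ε₂ := fun m j h => (hortho m j h).le
  by_contra! hcard
  have hindep := linearIndependent_of_norm_inner_le hunit hortho' (by simpa using hε₂)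
  obtain ⟨v, hvψ, hv0, hv⟩ := exists_mem_ne_zero_forall_inner_eq_zero_of_card_lt
    hA.eigenvectorBasis _ (V := Submodule.span ℂ (Set.range ψ))
    (by rwa [finrank_span_eq_card hindep, Fintype.card_fin])
  have hlower : Eb * ‖v‖ ≤ ‖Matrix.toEuclideanCLM (𝕜 := ℂ) H v‖ :=
    H.mul_norm_le_norm_toEuclideanCLM fun i hi => hv i (by simpa using hi)
  have hupper : ‖Matrix.toEuclideanCLM (𝕜 := ℂ) H v‖ * √d < √D * ε₁ * ‖v‖ := by
    simpa using norm_apply_mul_sqrt_lt_of_mem_span hunit hortho'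
      (Matrix.toEuclideanCLM (𝕜 := ℂ) H : EuclideanSpace ℂ (Fin n) →ₗ[ℂ] EuclideanSpace ℂ (Fin n))
      hsmall hvψ hv0
  have hD : (1 : ℝ) ≤ D := by exact_mod_cast (Nat.zero_le _).trans_lt hcard
  have hε₁ : 0 < ε₁ := (norm_nonneg _).trans_lt (hsmall ⟨0, by omega⟩)
  have hd : 0 < √d := Real.sqrt_pos.2 (by linarith)
  have hsqrtD : √D ≤ D := (Real.sqrt_le_left (by linarith)).2 (by nlinarith)
  refine lt_irrefl ((D : ℝ) * ε₁ * ‖v‖) ?_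
  calc (D : ℝ) * ε₁ * ‖v‖ = Eb * ‖v‖ * √d := by rw [mul_right_comm Eb, div_mul_cancel₀ _ hd.ne']
    _ ≤ ‖Matrix.toEuclideanCLM (𝕜 := ℂ) H v‖ * √d := by gcongr
    _ < √D * ε₁ * ‖v‖ := hupper
    _ ≤ D * ε₁ * ‖v‖ := by gcongr
end
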